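/- Let (λ_ε) be complex numbers with Re λ_ε > 0, Im λ_ε < 0, λ_ε → 0 as ε → 0, and suppose Re λ_ε / |λ_ε|² is bounded below by a positive constant c. Let n > 0 be fixed and let ñ_ε = ñ₁(ε) + i ñ₂(ε) with ñ₂(ε) ≥ 0 satisfy ñ₁(ε)² − ñ₂(ε)² = n² + A·Re λ_ε and ñ₁(ε)·ñ₂(ε) = B·Im λ_ε for fixed constants A > 0, B > 0, and ñ₁(ε) < 0 for all ε. Then ñ₁(ε) → −n and ñ₂(ε) → 0 as ε → 0. -/

import Mathlib

open Filter

/-- Limiting metamaterial statement: the equivalent index of refraction tends to `-n`. -/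
theorem stmt_2 (lam : ℝ → ℂ) (nt1 nt2 : ℝ → ℝ) (n A B c : ℝ)
    (hn : 0 < n) (hA : 0 < A) (hB : 0 < B) (hc : 0 < c)
    (hre : ∀ ε > 0, 0 < (lam ε).re)
    (him : ∀ ε > 0, (lam ε).im < 0)
    (hlim : Tendsto lam (nhdsWithin 0 (Set.Ioi 0)) (nhds 0))
    (hbelow : ∀ ε > 0, c ≤ (lam ε).re / ‖lam ε‖ ^ 2)
    (hpassive : ∀ ε > 0, 0 ≤ nt2 ε)
    (heq1 : ∀ ε > 0, nt1 ε ^ 2 - nt2 ε ^ 2 = n ^ 2 + A * (lam ε).re)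
    (heq2 : ∀ ε > 0, nt1 ε * nt2 ε = B * (lam ε).im)
    (hneg : ∀ ε > 0, nt1 ε < 0) :
    Tendsto nt1 (nhdsWithin 0 (Set.Ioi 0)) (nhds (-n)) ∧
      Tendsto nt2 (nhdsWithin 0 (Set.Ioi 0)) (nhds 0) := by
  set l := nhdsWithin (0:ℝ) (Set.Ioi 0)
  have hmem : ∀ᶠ ε in l, ε ∈ Set.Ioi (0:ℝ) := self_mem_nhdsWithin
  have hreT : Tendsto (fun ε => (lam ε).re) l (nhds 0) := by
    simpa [Function.comp_def] using (Complex.continuous_re.tendsto 0).comp hlim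
  have himT : Tendsto (fun ε => (lam ε).im) l (nhds 0) := by
    simpa [Function.comp_def] using (Complex.continuous_im.tendsto 0).comp hlim
  -- nt1 ε ≤ -n for ε > 0
  have hle : ∀ ε > 0, nt1 ε ≤ -n := by
    intro ε hε
    have h1 := heq1 ε hε
    have h2 := hpassive ε hε
    have h3 := hre ε hε
    have h4 := hneg ε hε
    nlinarith [sq_nonneg (nt1 ε + n), sq_nonneg (nt2 ε)]
  -- squeeze for nt2
  have hnt2 : Tendsto nt2 l (nhds 0) := by
    have hbound : ∀ᶠ ε in l, nt2 ε ≤ B / n * (-(lam ε).im) := by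
      filter_upwards [hmem] with ε hε
      have h2 := heq2 ε hε
      have h3 := him ε hε
      have h4 := hle ε hε
      have h5 := hpassive ε hε
      have key : nt1 ε * nt2 ε ≤ -n * nt2 ε :=
        mul_le_mul_of_nonneg_right h4 h5
      rw [div_mul_eq_mul_div, le_div_iff₀ hn]
      nlinarith
    have hupper : Tendsto (fun ε => B / n * (-(lam ε).im)) l (nhds 0) := by
      have := himT.neg.const_mul (B / n)
      simpa using this
    refine tendsto_of_tendsto_of_tendsto_of_le_of_le' tendsto_const_nhds hupper
      ?_ hbound
    filter_upwards [hmem] with ε hε using hpassive ε hε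
  refine ⟨?_, hnt2⟩
  -- nt1
  have hsq : Tendsto (fun ε => n ^ 2 + A * (lam ε).re + nt2 ε ^ 2) l (nhds (n ^ 2)) := by
    have : Tendsto (fun ε => n ^ 2 + A * (lam ε).re + nt2 ε ^ 2) l
        (nhds (n ^ 2 + A * 0 + 0 ^ 2)) :=
      (tendsto_const_nhds.add (hreT.const_mul A)).add (hnt2.pow 2)
    simpa using this
  have hroot : Tendsto (fun ε => -Real.sqrt (n ^ 2 + A * (lam ε).re + nt2 ε ^ 2)) l
      (nhds (-n)) := by
    have := (Real.continuous_sqrt.tendsto (n ^ 2)).comp hsq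
    rw [Real.sqrt_sq hn.le] at this
    exact this.neg
  refine hroot.congr' ?_
  filter_upwards [hmem] with ε hε
  have h1 : nt1 ε ^ 2 = n ^ 2 + A * (lam ε).re + nt2 ε ^ 2 := by
    have := heq1 ε hε; linarith
  rw [← h1, Real.sqrt_sq_eq_abs, abs_of_neg (hneg ε hε), neg_neg]
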